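/- Let u₁ < ... < u_M be the states and suppose a right-continuous piecewise constant profile u : ℝ → {u₁,...,u_M} has only downward jumps or upward jumps between nearest neighbors (i.e., at each jump point x, either u(x-) > u(x), or u(x) is the immediate successor state of u(x-)). If two adjacent jumps merge (a jump from a to w at position y₁ followed by a jump from w to b at position y₂ collapse as y₂ → y₁ into a single jump from a to b), then the resulting jump also satisfies the condition: either a > b or b is the immediate successor of a — provided the merge only occurs when the left shock speed exceeds the right shock speed for a strictly convex flux f. Specifically: if c_{aw} > c_{wb} (with c_{pq} := (f(p)-f(q))/(p-q), f strictly convex), a ≠ b, and both jumps (a,w) and (w,b) are admissible (downward or nearest-neighbor-upward), then the jump (a,b) is admissible (downward or nearest-neighbor-upward). -/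
import Mathlib


theorem admissible_jumps_closed_under_merging (M : ℕ) (u : Fin M → ℝ) (hu : StrictMono u)
    (f : ℝ → ℝ) (hf : StrictConvexOn ℝ Set.univ f)
    (a w b : Fin M) (hab : a ≠ b)
    (haw : u w < u a ∨ (w : ℕ) = (a : ℕ) + 1)
    (hwb : u b < u w ∨ (b : ℕ) = (w : ℕ) + 1)
    (hcatch : (f (u a) - f (u w)) / (u a - u w) > (f (u w) - f (u b)) / (u w - u b)) :
    u b < u a ∨ (b : ℕ) = (a : ℕ) + 1 := by
  rcases haw with h1 | h1 <;> rcases hwb with h2 | h2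
  · exact Or.inl (h2.trans h1)
  · -- w < a, b = w + 1 ≤ a, b ≠ a so b < a
    left
    apply hu
    have hwa : w < a := hu.lt_iff_lt.mp h1
    have : (b : ℕ) ≤ (a : ℕ) := by omega
    rcases lt_or_eq_of_le this with h | h
    · exact h
    · exact absurd (Fin.ext h).symm hab
  · -- w = a + 1, b < w so b ≤ a, b ≠ a so b < a
    left
    apply hu
    have hbw : b < w := hu.lt_iff_lt.mp h2
    have : (b : ℕ) ≤ (a : ℕ) := by omega
    rcases lt_or_eq_of_le this with h | h
    · exact h
    · exact absurd (Fin.ext h).symm hab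
  · -- both upward: a < w < b, contradicts convexity vs hcatch
    exfalso
    have haw' : a < w := by omega
    have hwb' : w < b := by omega
    have h3 : u a < u w := hu haw'
    have h4 : u w < u b := hu hwb'
    have := hf.secant_strict_mono (Set.mem_univ (u w)) (Set.mem_univ (u a))
      (Set.mem_univ (u b)) (ne_of_lt h3) (ne_of_gt h4) (h3.trans h4)
    have heq : (f (u w) - f (u b)) / (u w - u b) = (f (u b) - f (u w)) / (u b - u w) := by
      rw [← neg_div_neg_eq]; ring_nf
    linarith
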